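/- Let k be a field and V^• = ⊕_{i=0}^m V^i a graded k-vector space with dim V^i = n_i. A vector r ∈ R is a maximal element of the poset R if and only if for every differential D ∈ C(V^•) with rk D_i = r_{i+1} for all i, the graded cohomology space H^•_D(V^•) is sparse, i.e., dim H^i_D(V^•) · dim H^{i+1}_D(V^•) = 0 for every i. Equivalently, r is maximal in R if and only if (n_i − r_i − r_{i+1})(n_{i+1} − r_{i+1} − r_{i+2}) = 0 for every i. -/

import Mathlib

/-!
STATEMENT 16: For V^• = ⊕_{i=0}^m V^i with dim V^i = n_i, a vector r ∈ R is maximal in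
the poset R iff for every differential D with rk D_i = r_{i+1} the cohomology H^•_D(V^•)
is sparse (dim H^i · dim H^{i+1} = 0 ∀i), and equivalently iff
(n_i − r_i − r_{i+1})(n_{i+1} − r_{i+1} − r_{i+2}) = 0 for every i.
-/

/-- Membership in the set R. -/
def memR (m : ℕ) (n r : ℕ → ℕ) : Prop :=
  r 0 = 0 ∧ (∀ i, i > m → r i = 0) ∧ ∀ i ≤ m, r i + r (i + 1) ≤ n i

section

variable {k : Type*} [Field k] {V : ℕ → Type*}
variable [∀ i, AddCommGroup (V i)] [∀ i, Module k (V i)]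

/-- dim H^j for a complex (V^•, D) concentrated in nonnegative degrees:
H^0 = Ker D_0, H^{j+1} = Ker D_{j+1} / Im D_j. -/
noncomputable def hdim (D : ∀ i, V i →ₗ[k] V (i + 1)) : ℕ → ℕ
  | 0 => Module.finrank k ↥(LinearMap.ker (D 0))
  | (j + 1) => Module.finrank k
      (↥(LinearMap.ker (D (j + 1))) ⧸
        (LinearMap.range (D j)).comap (LinearMap.ker (D (j + 1))).subtype)

end

/-!
An entry `r (i + 1)` can be raised inside `R` exactly when the slacks `n i - r i - r (i + 1)` and
`n (i + 1) - r (i + 1) - r (i + 2)` on both sides of it are positive, so `r` is maximal iff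
consecutive slacks always have product zero. By rank–nullity these slacks are the cohomology
dimensions of every complex with rank vector `r`, and such a complex exists: send the first
`r (i + 1)` basis vectors of `V i` to the last `r (i + 1)` basis vectors of `V (i + 1)`, which the
next differential kills.
-/

section Combinatorics

variable {m : ℕ} {n r s : ℕ → ℕ}

theorem memR.add_le (hr : memR m n r) (i : ℕ) : r i + r (i + 1) ≤ n i := by
  obtain ⟨-, hrm, hrle⟩ := hr
  by_cases hi : i ≤ m
  · exact hrle i hi
  · rw [hrm i (by omega), hrm (i + 1) (by omega)]
    exact Nat.zero_le _

theorem memR.update_succ (hr : memR m n r) {i : ℕ} (him : i + 1 ≤ m)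
    (h₁ : r i + r (i + 1) < n i) (h₂ : r (i + 1) + r (i + 2) < n (i + 1)) :
    memR m n (Function.update r (i + 1) (r (i + 1) + 1)) := by
  obtain ⟨hr0, hrm, hrle⟩ := hr
  refine ⟨?_, fun j hj => ?_, fun j hj => ?_⟩
  · rwa [Function.update_of_ne (by omega)]
  · rw [Function.update_of_ne (by omega)]
    exact hrm j hj
  · simp only [Function.update_apply]
    split_ifs <;> grind

theorem eq_of_memR_of_le (hr0 : r 0 = 0)
    (hprod : ∀ i, (n i - r i - r (i + 1)) * (n (i + 1) - r (i + 1) - r (i + 2)) = 0)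
    (hs : memR m n s) (hle : ∀ i, r i ≤ s i) : s = r := by
  have hsle := hs.add_le
  obtain ⟨hs0, hsm, -⟩ := hs
  funext j
  induction j with
  | zero => rw [hs0, hr0]
  | succ t ih =>
    by_contra hne
    have hlt : r (t + 1) < s (t + 1) := lt_of_le_of_ne (hle (t + 1)) (Ne.symm hne)
    have htm : t + 1 ≤ m := by
      by_contra h
      rw [hsm (t + 1) (by omega)] at hlt
      omega
    -- the slack at `t` is positive, so the slack at `t + 1` vanishes, leaving no room for `s`
    have h₁ := hsle t
    have h₂ : s (t + 1) + s (t + 2) ≤ n (t + 1) := hsle (t + 1)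
    have h₃ := hle (t + 2)
    rcases Nat.mul_eq_zero.mp (hprod t) with h | h <;> omega

theorem memR_maximal_iff (hr : memR m n r) (hn0 : ∀ i, m < i → n i = 0) :
    (∀ s, memR m n s → (∀ i, r i ≤ s i) → s = r) ↔
      ∀ i, (n i - r i - r (i + 1)) * (n (i + 1) - r (i + 1) - r (i + 2)) = 0 := by
  refine ⟨fun hmax i => ?_, fun hprod s hs hle => eq_of_memR_of_le hr.1 hprod hs hle⟩
  by_contra hne
  obtain ⟨h₁, h₂⟩ := Nat.mul_ne_zero_iff.mp hne
  have him : i + 1 ≤ m := by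
    by_contra h
    rw [hn0 (i + 1) (by omega)] at h₂
    omega
  have hupd := hmax _ (hr.update_succ him (by omega) (by omega)) fun j => by
    rcases eq_or_ne j (i + 1) with rfl | hj
    · simp
    · simp [hj]
  have := congrFun hupd (i + 1)
  simp at this

end Combinatorics

section Cohomology

variable {k : Type*} [Field k] {V : ℕ → Type*}
variable [∀ i, AddCommGroup (V i)] [∀ i, Module k (V i)] [∀ i, FiniteDimensional k (V i)]

theorem hdim_zero_add_finrank_range (D : ∀ i, V i →ₗ[k] V (i + 1)) :
    hdim D 0 + Module.finrank k (LinearMap.range (D 0)) = Module.finrank k (V 0) := by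
  rw [hdim, add_comm]
  exact LinearMap.finrank_range_add_finrank_ker (D 0)

theorem hdim_succ_add_finrank_range (D : ∀ i, V i →ₗ[k] V (i + 1)) {j : ℕ}
    (hD : (D (j + 1)).comp (D j) = 0) :
    hdim D (j + 1) + Module.finrank k (LinearMap.range (D j)) +
      Module.finrank k (LinearMap.range (D (j + 1))) = Module.finrank k (V (j + 1)) := by
  have hsub : LinearMap.range (D j) ≤ LinearMap.ker (D (j + 1)) :=
    LinearMap.range_le_ker_iff.mpr hD
  rw [hdim, ← LinearEquiv.finrank_eq (Submodule.comapSubtypeEquivOfLe hsub),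
    Submodule.finrank_quotient_add_finrank, add_comm]
  exact LinearMap.finrank_range_add_finrank_ker (D (j + 1))

theorem hdim_eq_of_finrank_range {n r : ℕ → ℕ} (hn : ∀ i, n i = Module.finrank k (V i))
    (hr0 : r 0 = 0) (D : ∀ i, V i →ₗ[k] V (i + 1)) (hD : ∀ i, (D (i + 1)).comp (D i) = 0)
    (hrk : ∀ i, Module.finrank k (LinearMap.range (D i)) = r (i + 1)) (i : ℕ) :
    hdim D i = n i - r i - r (i + 1) := by
  cases i with
  | zero =>
    have := hdim_zero_add_finrank_range D
    rw [hrk, ← hn] at this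
    omega
  | succ j =>
    have := hdim_succ_add_finrank_range D (hD j)
    rw [hrk, hrk, ← hn] at this
    omega

end Cohomology

section ShiftDifferential

variable {k : Type*} [Field k] {V : ℕ → Type*}
variable [∀ i, AddCommGroup (V i)] [∀ i, Module k (V i)]
variable {n r : ℕ → ℕ} (b : ∀ i, Module.Basis (Fin (n i)) k (V i))
  (hr : ∀ i, r i + r (i + 1) ≤ n i)

noncomputable def shiftDifferential (i : ℕ) : V i →ₗ[k] V (i + 1) :=
  (b i).constr k fun j =>
    if h : (j : ℕ) < r (i + 1) then b (i + 1) ⟨n (i + 1) - r (i + 1) + j, by have := hr (i + 1); omega⟩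
    else 0

theorem shiftDifferential_basis (i : ℕ) (j : Fin (n i)) :
    shiftDifferential b hr i (b i j) =
      if h : (j : ℕ) < r (i + 1) then
        b (i + 1) ⟨n (i + 1) - r (i + 1) + j, by have := hr (i + 1); omega⟩
      else 0 :=
  Module.Basis.constr_basis _ _ _ _

theorem shiftDifferential_comp_shiftDifferential (i : ℕ) :
    (shiftDifferential b hr (i + 1)).comp (shiftDifferential b hr i) = 0 := by
  refine (b i).ext fun j => ?_
  rw [LinearMap.comp_apply, LinearMap.zero_apply, shiftDifferential_basis]
  split_ifs with h
  · rw [shiftDifferential_basis, dif_neg]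
    have := hr (i + 1)
    dsimp only
    omega
  · exact map_zero _

theorem finrank_range_shiftDifferential (i : ℕ) :
    Module.finrank k (LinearMap.range (shiftDifferential b hr i)) = r (i + 1) := by
  have hle := hr (i + 1)
  have hle' := hr i
  let g : Fin (r (i + 1)) → V (i + 1) := fun t => b (i + 1) ⟨n (i + 1) - r (i + 1) + t, by omega⟩
  have hg : LinearIndependent k g :=
    (b (i + 1)).linearIndependent.comp _ fun a c hac => Fin.ext (by simp at hac; omega)
  have hrange : LinearMap.range (shiftDifferential b hr i) = Submodule.span k (Set.range g) := by
    rw [shiftDifferential, Module.Basis.constr_range]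
    apply le_antisymm <;> rw [Submodule.span_le]
    · rintro x ⟨j, rfl⟩
      dsimp only
      split_ifs with h
      · exact Submodule.subset_span ⟨⟨j, h⟩, rfl⟩
      · exact Submodule.zero_mem _
    · rintro x ⟨t, rfl⟩
      exact Submodule.subset_span ⟨⟨t, by omega⟩, dif_pos t.2⟩
  rw [hrange, finrank_span_eq_card hg, Fintype.card_fin]

end ShiftDifferential

theorem stmt_16
    (k : Type*) [Field k] (m : ℕ)
    (V : ℕ → Type*) [∀ i, AddCommGroup (V i)] [∀ i, Module k (V i)]
    [∀ i, FiniteDimensional k (V i)]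
    (hVtriv : ∀ i, i > m → Subsingleton (V i))
    (n : ℕ → ℕ) (hn : ∀ i, n i = Module.finrank k (V i))
    (r : ℕ → ℕ) (hr : memR m n r) :
    -- r is maximal in R iff every differential with rank vector r has sparse cohomology
    ((∀ s, memR m n s → (∀ i, r i ≤ s i) → s = r) ↔
      (∀ D : ∀ i, V i →ₗ[k] V (i + 1), (∀ i, (D (i + 1)).comp (D i) = 0) →
        (∀ i, Module.finrank k ↥(LinearMap.range (D i)) = r (i + 1)) →
        ∀ i, hdim D i * hdim D (i + 1) = 0)) ∧
    -- equivalently, iff (n_i − r_i − r_{i+1})·(n_{i+1} − r_{i+1} − r_{i+2}) = 0 for all i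
    ((∀ s, memR m n s → (∀ i, r i ≤ s i) → s = r) ↔
      (∀ i, (n i - r i - r (i + 1)) * (n (i + 1) - r (i + 1) - r (i + 2)) = 0)) := by
  have hn0 : ∀ i, m < i → n i = 0 := fun i hi => by
    have := hVtriv i hi
    rw [hn i, Module.finrank_zero_of_subsingleton]
  have hmax := memR_maximal_iff hr hn0
  have hdim_eq := hdim_eq_of_finrank_range hn hr.1
  refine ⟨?_, hmax⟩
  rw [hmax]
  constructor
  · intro hprod D hD hrk i
    rw [hdim_eq D hD hrk, hdim_eq D hD hrk]
    exact hprod i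
  · intro hsparse i
    let b i := Module.finBasisOfFinrankEq k (V i) (hn i).symm
    have hD := shiftDifferential_comp_shiftDifferential b hr.add_le
    have hrk := finrank_range_shiftDifferential b hr.add_le
    simpa only [hdim_eq _ hD hrk] using hsparse _ hD hrk i
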